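/- In the torus example X = 𝕋 ∪ H, for every surjective isometry g_ℝ of the Euclidean line ℝ there exists exactly one surjective isometry φ of (X, d) such that for every t ∈ ℝ the image φ(g(t), t) belongs to 𝕋 × {g_ℝ(t)} (equivalently, φ(g(t), t) = (g(g_ℝ(t)), g_ℝ(t))). -/

import Mathlib

/-- The distance of the Z-construction on the disjoint union `Y ⊕ (Y × ℝ)`. -/
noncomputable def zdist {Y : Type*} [MetricSpace Y] (R M : ℝ) :
    Y ⊕ Y × ℝ → Y ⊕ Y × ℝ → ℝ
  | Sum.inl y₁, Sum.inl y₂ => dist y₁ y₂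
  | Sum.inl y₁, Sum.inr q => dist y₁ q.1 + R
  | Sum.inr p, Sum.inl y₂ => dist p.1 y₂ + R
  | Sum.inr p, Sum.inr q => dist p.1 q.1 + min |p.2 - q.2| M

/-- The 2-torus `𝕋 = AddCircle 1 × AddCircle 1` with the product (max) metric. -/
abbrev T2 : Type := AddCircle (1 : ℝ) × AddCircle (1 : ℝ)

/-- The dense one-parameter subgroup `g(t) = (t mod 1, αt mod 1)` of the torus. -/
noncomputable def torusFlow (α : ℝ) (t : ℝ) : T2 :=
  ((t : AddCircle (1 : ℝ)), ((α * t : ℝ) : AddCircle (1 : ℝ)))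

/-- The space `X = 𝕋 ∪ H` where `H = {(g(t), t) : t ∈ ℝ}`, as a subset of
`Z = 𝕋 ⊕ (𝕋 × ℝ)`. -/
def torusX (α : ℝ) : Set (T2 ⊕ T2 × ℝ) :=
  {z | ∃ y : T2, z = Sum.inl y} ∪ {z | ∃ t : ℝ, z = Sum.inr (torusFlow α t, t)}

theorem memT (α : ℝ) (y : T2) : (Sum.inl y : T2 ⊕ T2 × ℝ) ∈ torusX α :=
  Or.inl ⟨y, rfl⟩

theorem memH (α : ℝ) (t : ℝ) :
    (Sum.inr (torusFlow α t, t) : T2 ⊕ T2 × ℝ) ∈ torusX α :=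
  Or.inr ⟨t, rfl⟩

/-!
An isometry of the line is `t ↦ c ± t`, and the matching translation or reflection `σ` of the
torus satisfies `σ (g t) = g (g_ℝ t)`; together with `g_ℝ` on `H` it gives an isometry of `X`.
Conversely, an isometry `ψ` acting on `H` as prescribed cannot send a torus point into `H`,
because its distance to `ψ (g t, t)` would drop from at least `R > 0` to `0` for the `t` with
`g_ℝ t` the `ℝ`-coordinate of the image. On `𝕋` it is then pinned down by the distances to the
points of `H`, since `g(ℝ)` is dense in `𝕋` when `α` is irrational.
-/

open Function

theorem DenseRange.eq_of_forall_dist_eq {X ι : Type*} [MetricSpace X] {f : ι → X}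
    (hf : DenseRange f) {x y : X} (h : ∀ i, dist x (f i) = dist y (f i)) : x = y := by
  have hdist : dist x = dist y :=
    hf.equalizer (continuous_const.dist continuous_id) (continuous_const.dist continuous_id)
      (funext h)
  simpa using congrFun hdist y

theorem Real.apply_eq_add_or_apply_eq_sub {f : ℝ → ℝ} (hf : ∀ s t, dist (f s) (f t) = dist s t) :
    (∀ t, f t = f 0 + t) ∨ ∀ t, f t = f 0 - t := by
  have hsq : ∀ s t, (f s - f t) ^ 2 = (s - t) ^ 2 := fun s t => by
    rw [sq_eq_sq_iff_abs_eq_abs, ← Real.dist_eq, ← Real.dist_eq, hf]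
  have hmul : ∀ t, (f t - f 0) * (f 1 - f 0) = t := fun t => by
    linear_combination (hsq t 0 + hsq 1 0 - hsq t 1) / 2
  rcases mul_self_eq_one_iff.mp (hmul 1) with h | h
  · exact Or.inl fun t => by linear_combination hmul t - (f t - f 0) * h
  · exact Or.inr fun t => by linear_combination -hmul t + (f t - f 0) * h

section TorusFlow

variable (α : ℝ)

theorem torusFlow_add (s t : ℝ) : torusFlow α (s + t) = torusFlow α s + torusFlow α t := by
  simp only [torusFlow, mul_add, AddCircle.coe_add, Prod.mk_add_mk]

theorem torusFlow_sub (s t : ℝ) : torusFlow α (s - t) = torusFlow α s - torusFlow α t := by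
  simp only [torusFlow, mul_sub, AddCircle.coe_sub, Prod.mk_sub_mk]

theorem torusFlow_intCast (n : ℤ) : torusFlow α n = (0, n • (α : AddCircle (1 : ℝ))) := by
  rw [torusFlow, mul_comm, ← zsmul_eq_mul, AddCircle.coe_zsmul,
    (AddCircle.coe_eq_zero_iff (1 : ℝ)).mpr ⟨n, by simp⟩]

theorem exists_isometryEquiv_torusFlow_comp {gR : ℝ → ℝ}
    (hgR : ∀ s t, dist (gR s) (gR t) = dist s t) :
    ∃ σ : T2 ≃ᵢ T2, ∀ t, σ (torusFlow α t) = torusFlow α (gR t) := by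
  rcases Real.apply_eq_add_or_apply_eq_sub hgR with h | h
  · exact ⟨IsometryEquiv.addLeft (torusFlow α (gR 0)), fun t => by rw [h t, torusFlow_add]; rfl⟩
  · exact ⟨IsometryEquiv.subLeft (torusFlow α (gR 0)), fun t => by rw [h t, torusFlow_sub]; rfl⟩

end TorusFlow

theorem denseRange_torusFlow {α : ℝ} (hα : Irrational α) : DenseRange (torusFlow α) := by
  let F : ℝ × AddCircle (1 : ℝ) → T2 := fun p => (p.1, ((α * p.1 : ℝ) : AddCircle (1 : ℝ)) + p.2)
  have hF : DenseRange F := Surjective.denseRange fun y => by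
    obtain ⟨x, hx⟩ := QuotientAddGroup.mk_surjective y.1
    exact ⟨(x, y.2 - ((α * x : ℝ) : AddCircle (1 : ℝ))), Prod.ext hx (by simp [F])⟩
  have hzsmul : DenseRange (· • (α : AddCircle (1 : ℝ)) : ℤ → AddCircle (1 : ℝ)) :=
    AddCircle.denseRange_zsmul_coe_iff.mpr (by simpa using hα)
  refine (hF.comp (denseRange_id.prodMap hzsmul) (by fun_prop)).mono ?_
  rintro _ ⟨⟨x, n⟩, rfl⟩
  refine ⟨x + n, ?_⟩
  rw [torusFlow_add, torusFlow_intCast]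
  simp [F, torusFlow]

namespace torusX

variable {α : ℝ}

noncomputable def ofTorus (α : ℝ) (y : T2) : torusX α := ⟨Sum.inl y, memT α y⟩

noncomputable def ofLine (α : ℝ) (t : ℝ) : torusX α := ⟨Sum.inr (torusFlow α t, t), memH α t⟩

theorem eq_ofTorus_or_eq_ofLine (x : torusX α) : (∃ y, x = ofTorus α y) ∨ ∃ t, x = ofLine α t := by
  obtain ⟨_, ⟨y, rfl⟩ | ⟨t, rfl⟩⟩ := x
  exacts [Or.inl ⟨y, rfl⟩, Or.inr ⟨t, rfl⟩]

noncomputable def map (σ : T2 → T2) (gR : ℝ → ℝ) : torusX α → torusX α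
  | ⟨Sum.inl y, _⟩ => ofTorus α (σ y)
  | ⟨Sum.inr p, _⟩ => ofLine α (gR p.2)

variable {σ : T2 → T2} {gR : ℝ → ℝ}

@[simp] theorem map_ofTorus (y : T2) : map σ gR (ofTorus α y) = ofTorus α (σ y) := rfl

@[simp] theorem map_ofLine (t : ℝ) : map σ gR (ofLine α t) = ofLine α (gR t) := rfl

theorem map_surjective (hσ : Surjective σ) (hgR : Surjective gR) :
    Surjective (map (α := α) σ gR) := by
  intro x
  rcases eq_ofTorus_or_eq_ofLine x with ⟨y, rfl⟩ | ⟨s, rfl⟩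
  · obtain ⟨w, rfl⟩ := hσ y
    exact ⟨ofTorus α w, rfl⟩
  · obtain ⟨t, rfl⟩ := hgR s
    exact ⟨ofLine α t, rfl⟩

theorem zdist_map (σ : T2 ≃ᵢ T2) (hgR : ∀ s t, dist (gR s) (gR t) = dist s t)
    (hσ : ∀ t, σ (torusFlow α t) = torusFlow α (gR t)) (R M : ℝ) (p q : torusX α) :
    zdist R M (map σ gR p).1 (map σ gR q).1 = zdist R M p.1 q.1 := by
  simp only [Real.dist_eq] at hgR
  rcases eq_ofTorus_or_eq_ofLine p with ⟨y, rfl⟩ | ⟨s, rfl⟩ <;>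
  rcases eq_ofTorus_or_eq_ofLine q with ⟨z, rfl⟩ | ⟨t, rfl⟩ <;>
  simp only [map_ofTorus, map_ofLine] <;>
  simp [zdist, ofTorus, ofLine, ← hσ, hgR, σ.dist_eq]

section Uniqueness

variable {R M : ℝ} {ψ : torusX α → torusX α}
  (hψ : ∀ p q, zdist R M (ψ p).1 (ψ q).1 = zdist R M p.1 q.1)
  (hψline : ∀ t, ψ (ofLine α t) = ofLine α (gR t))
include hψ hψline

theorem exists_apply_ofTorus_eq_ofTorus (hR : 0 < R) (hgR : Surjective gR) (y : T2) :
    ∃ w, ψ (ofTorus α y) = ofTorus α w := by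
  refine (eq_ofTorus_or_eq_ofLine (ψ (ofTorus α y))).resolve_right ?_
  rintro ⟨s, hs⟩
  obtain ⟨t, rfl⟩ := hgR s
  have h := hψ (ofTorus α y) (ofLine α t)
  rw [hs, hψline] at h
  simp only [zdist, ofTorus, ofLine, dist_self, sub_self, abs_zero, zero_add] at h
  linarith [min_le_left 0 M, dist_nonneg (x := y) (y := torusFlow α t)]

theorem eq_map_of_zdist_eq (hα : Irrational α) (hR : 0 < R) (hgR : Surjective gR) (σ : T2 ≃ᵢ T2)
    (hσ : ∀ t, σ (torusFlow α t) = torusFlow α (gR t)) : ψ = map σ gR := by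
  funext x
  rcases eq_ofTorus_or_eq_ofLine x with ⟨y, rfl⟩ | ⟨t, rfl⟩
  · obtain ⟨w, hw⟩ := exists_apply_ofTorus_eq_ofTorus hψ hψline hR hgR y
    rw [hw, map_ofTorus]
    congr 1
    refine (denseRange_torusFlow hα).eq_of_forall_dist_eq fun s => ?_
    obtain ⟨t, rfl⟩ := hgR s
    have h := hψ (ofTorus α y) (ofLine α t)
    rw [hw, hψline] at h
    simp only [zdist, ofTorus, ofLine, add_left_inj] at h
    rw [h, ← hσ, σ.dist_eq]
  · rw [hψline, map_ofLine]

end Uniqueness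

end torusX

/-- in the torus example `X = 𝕋 ∪ H`, for every surjective isometry
`g_ℝ` of the Euclidean line there is exactly one surjective isometry `φ` of
`(X, d)` such that `φ(g(t), t) = (g(g_ℝ(t)), g_ℝ(t))` for every `t ∈ ℝ`
(equivalently, `φ(g(t), t) ∈ 𝕋 × {g_ℝ(t)}`). -/
theorem torus_isometry_existsUnique_over_line (α : ℝ) (hα : Irrational α)
    (R M : ℝ) (hM : 0 < M) (hRM : M ≤ 2 * R)
    (gR : ℝ → ℝ) (hgRsurj : Function.Surjective gR)
    (hgRiso : ∀ s t : ℝ, dist (gR s) (gR t) = dist s t) :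
    ∃! φ : torusX α → torusX α,
      Function.Surjective φ ∧
      (∀ p q : torusX α, zdist R M (φ p).1 (φ q).1 = zdist R M p.1 q.1) ∧
      (∀ t : ℝ, (φ ⟨Sum.inr (torusFlow α t, t), memH α t⟩).1 =
          Sum.inr (torusFlow α (gR t), gR t)) := by
  obtain ⟨σ, hσ⟩ := exists_isometryEquiv_torusFlow_comp α hgRiso
  refine ⟨torusX.map σ gR, ⟨torusX.map_surjective σ.surjective hgRsurj,
    torusX.zdist_map σ hgRiso hσ R M, fun t => rfl⟩, ?_⟩
  rintro ψ ⟨-, hψ, hψline⟩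
  exact torusX.eq_map_of_zdist_eq hψ (fun t => Subtype.ext (hψline t)) hα (by linarith) hgRsurj σ hσ
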